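/- Suppose a ∈ (-1/2, 1/2), q ∈ ℕ is even, p is coprime to q, φ₀ = 0, and C_a = 2pπ/q. Then φ(a, qπ/2 - s) = -φ(a, s) + pπ for all s, and consequently f_a(qπ/2 - s) = -f_a(s) for all s ∈ ℝ; in particular f_a(qπ/4) = 0. -/

import Mathlib

/-!
The integrand `ψ a` is even and `π`-periodic, hence symmetric under `t ↦ kπ - t` for every
natural `k`. Consequently `φ(a, kπ - s) + φ(a, s) = ∫₀^{kπ} ψ = k C_a`; with `q = 2k` the
hypothesis `C_a = 2pπ/q` makes this `pπ`, and `p` is odd because it is coprime to the even `q`.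
Reflecting `s ↦ kπ - s` fixes `cos 2s` and flips `sin 2s`, while `φ ↦ pπ - φ` with `p` odd
fixes `sin φ` and flips `cos φ`; so every term of `f_a` changes sign.
-/

open Real MeasureTheory intervalIntegral

noncomputable def psi (a t : ℝ) : ℝ :=
  Real.sqrt (1/4 - a^2) /
    (Real.sqrt (1/2 + a * Real.cos (2*t)) * (1/2 - a * Real.cos (2*t)))

noncomputable def phi (a phi0 s : ℝ) : ℝ := phi0 + ∫ t in (0:ℝ)..s, psi a t

noncomputable def Ca (a : ℝ) : ℝ := ∫ t in (0:ℝ)..Real.pi, psi a t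

noncomputable def xa (a phi0 s : ℝ) : ℝ :=
  Real.sqrt (1/2 - a * Real.cos (2*s)) * Real.cos (phi a phi0 s)

noncomputable def ya (a phi0 s : ℝ) : ℝ :=
  Real.sqrt (1/2 - a * Real.cos (2*s)) * Real.sin (phi a phi0 s)

noncomputable def za (a s : ℝ) : ℝ := Real.sqrt (1/2 + a * Real.cos (2*s))

noncomputable def fa (a phi0 s : ℝ) : ℝ :=
  a * Real.sin (2*s) * Real.sin (phi a phi0 s) +
    Real.sqrt (1/4 - a^2) * Real.sqrt (1/2 + a * Real.cos (2*s)) * Real.cos (phi a phi0 s)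

theorem intervalIntegral_zero_sub_of_reflect {E : Type*} [NormedAddCommGroup E]
    [NormedSpace ℝ E] {f : ℝ → E} {X : ℝ} (hf : Continuous f) (hX : ∀ t, f (X - t) = f t)
    (s : ℝ) : ∫ t in (0:ℝ)..X - s, f t = (∫ t in (0:ℝ)..X, f t) - ∫ t in (0:ℝ)..s, f t := by
  have hreflect : ∫ t in (0:ℝ)..s, f t = ∫ t in X - s..X, f t := by
    simpa only [hX, sub_zero] using integral_comp_sub_left f (a := 0) (b := s) X
  rw [hreflect, ← integral_add_adjacent_intervals (hf.intervalIntegrable 0 (X - s))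
    (hf.intervalIntegrable _ X), add_sub_cancel_right]

section psi

variable {a : ℝ}

lemma abs_mul_cos_lt (ha : |a| < 1/2) (t : ℝ) : |a * Real.cos (2*t)| < 1/2 := by
  rw [abs_mul]
  nlinarith [Real.abs_cos_le_one (2*t), abs_nonneg a, abs_nonneg (Real.cos (2*t))]

lemma half_add_mul_cos_pos (ha : |a| < 1/2) (t : ℝ) : 0 < 1/2 + a * Real.cos (2*t) := by
  linarith [(abs_lt.1 (abs_mul_cos_lt ha t)).1]

lemma half_sub_mul_cos_pos (ha : |a| < 1/2) (t : ℝ) : 0 < 1/2 - a * Real.cos (2*t) := by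
  linarith [(abs_lt.1 (abs_mul_cos_lt ha t)).2]

lemma psi_denom_pos (ha : |a| < 1/2) (t : ℝ) :
    0 < Real.sqrt (1/2 + a * Real.cos (2*t)) * (1/2 - a * Real.cos (2*t)) :=
  mul_pos (Real.sqrt_pos.2 (half_add_mul_cos_pos ha t)) (half_sub_mul_cos_pos ha t)

lemma continuous_psi (ha : |a| < 1/2) : Continuous (psi a) :=
  continuous_const.div (by fun_prop) fun t => (psi_denom_pos ha t).ne'

lemma psi_pos (ha : |a| < 1/2) (t : ℝ) : 0 < psi a t := by
  have hnum : 0 < Real.sqrt (1/4 - a^2) := Real.sqrt_pos.2 (by nlinarith [sq_abs a, abs_nonneg a])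
  exact div_pos hnum (psi_denom_pos ha t)

lemma psi_periodic (a : ℝ) : Function.Periodic (psi a) π := by
  intro t
  simp only [psi, mul_add, Real.cos_add_two_pi]

lemma psi_neg (a t : ℝ) : psi a (-t) = psi a t := by
  simp only [psi, mul_neg, Real.cos_neg]

lemma psi_nat_mul_pi_sub (a : ℝ) (k : ℕ) (t : ℝ) : psi a (k * π - t) = psi a t := by
  rw [(psi_periodic a).nat_mul_sub_eq, psi_neg]

lemma Ca_pos (ha : |a| < 1/2) : 0 < Ca a :=
  intervalIntegral_pos_of_pos ((continuous_psi ha).intervalIntegrable _ _) (psi_pos ha) pi_pos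

lemma integral_psi_nat_mul_pi (ha : |a| < 1/2) (k : ℕ) :
    ∫ t in (0:ℝ)..k * π, psi a t = k * Ca a := by
  simpa only [Ca, zero_add, natCast_zsmul, nsmul_eq_mul] using
    (psi_periodic a).intervalIntegral_add_zsmul_eq k 0
      fun _ _ => (continuous_psi ha).intervalIntegrable _ _

lemma phi_nat_mul_pi_sub (ha : |a| < 1/2) (phi0 : ℝ) (k : ℕ) (s : ℝ) :
    phi a phi0 (k * π - s) = 2 * phi0 + k * Ca a - phi a phi0 s := by
  rw [phi, phi, intervalIntegral_zero_sub_of_reflect (continuous_psi ha)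
    (psi_nat_mul_pi_sub a k), integral_psi_nat_mul_pi ha]
  ring

lemma fa_nat_mul_pi_sub {phi0 : ℝ} {k p : ℕ} (hp : Odd p) {s : ℝ}
    (hphi : phi a phi0 (k * π - s) = p * π - phi a phi0 s) :
    fa a phi0 (k * π - s) = -fa a phi0 s := by
  have h2 : 2 * (k * π - s) = (2 * k : ℕ) * π - 2 * s := by push_cast; ring
  have hk : Even (2 * k) := even_two_mul k
  simp only [fa, hphi, h2, Real.sin_nat_mul_pi_sub, Real.cos_nat_mul_pi_sub, hk.neg_one_pow,
    hp.neg_one_pow, one_mul]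
  ring

end psi

theorem stmt19 (a : ℝ) (ha : a ∈ Set.Ioo (-(1/2) : ℝ) (1/2)) (p q : ℕ)
    (hq : Even q) (hpq : Nat.Coprime p q)
    (hCa : Ca a = 2 * p * Real.pi / q) :
    (∀ s : ℝ, phi a 0 (q * Real.pi / 2 - s) = -(phi a 0 s) + p * Real.pi) ∧
    (∀ s : ℝ, fa a 0 (q * Real.pi / 2 - s) = -(fa a 0 s)) ∧
    fa a 0 (q * Real.pi / 4) = 0 := by
  have ha' : |a| < 1/2 := abs_lt.2 ha
  obtain ⟨k, rfl⟩ : ∃ k, q = 2 * k := hq.two_dvd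
  have hk : (k : ℝ) ≠ 0 := by
    rintro hk
    simp only [Nat.cast_mul, Nat.cast_ofNat, hk, mul_zero, div_zero] at hCa
    exact (Ca_pos ha').ne' hCa
  have hp : Odd p := (hpq.coprime_dvd_right (dvd_mul_right 2 k)).odd_of_right
  have hX : ((2 * k : ℕ) : ℝ) * π / 2 = k * π := by push_cast; ring
  have hkCa : (k : ℝ) * Ca a = p * π := by rw [hCa]; push_cast; field_simp
  have hphi : ∀ s, phi a 0 (k * π - s) = p * π - phi a 0 s := fun s => by
    rw [phi_nat_mul_pi_sub ha', hkCa]; ring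
  refine ⟨fun s => by rw [hX, hphi]; ring, fun s => hX ▸ fa_nat_mul_pi_sub hp (hphi s), ?_⟩
  have hmid := fa_nat_mul_pi_sub hp (hphi (k * π / 2))
  rw [show (k : ℝ) * π - k * π / 2 = k * π / 2 by ring] at hmid
  rw [show ((2 * k : ℕ) : ℝ) * π / 4 = k * π / 2 by push_cast; ring]
  linarith
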